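/- arXiv:1111.1390 — 4 statements merged into one kernel-verified Lean document; each statement's English description precedes it below -/
import Mathlib

section
/- Let ≼ be a partial order on a nonempty set X with asymmetric part P_≼, and let S be an equivalence relation on X satisfying P_≼ ∘ S = S ∘ P_≼ = P_≼. Then for any pair of points a,b ∈ X with (a,b) ∉ ≼ ∪ S and (b,a) ∉ ≼ ∪ S, there exists a total preorder ≾ on X which is a total preorder S-extension of ≼ and satisfies (a,b) ∈ ≾. -/
variable {X : Type*}

/-- `G` is a preorder: reflexive and transitive. -/
def IsPreorderRel (G : Set (X × X)) : Prop :=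
  (∀ x, (x, x) ∈ G) ∧ ∀ x y z, (x, y) ∈ G → (y, z) ∈ G → (x, z) ∈ G

/-- `G` is a partial order: an antisymmetric preorder. -/
def IsPartialOrderRel (G : Set (X × X)) : Prop :=
  IsPreorderRel G ∧ ∀ x y, (x, y) ∈ G → (y, x) ∈ G → x = y

/-- `G` is total. -/
def IsTotalRel (G : Set (X × X)) : Prop :=
  ∀ x y, (x, y) ∈ G ∨ (y, x) ∈ G

/-- `S` is an equivalence relation (as a set of pairs). -/
def IsEquivRel (S : Set (X × X)) : Prop :=
  (∀ x, (x, x) ∈ S) ∧ (∀ x y, (x, y) ∈ S → (y, x) ∈ S) ∧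
    ∀ x y z, (x, y) ∈ S → (y, z) ∈ S → (x, z) ∈ S

/-- The asymmetric part `P_G` of `G`. -/
def asymPart (G : Set (X × X)) : Set (X × X) :=
  {p | p ∈ G ∧ (p.2, p.1) ∉ G}

/-- The symmetric part `S_G` of `G`. -/
def symPart (G : Set (X × X)) : Set (X × X) :=
  {p | p ∈ G ∧ (p.2, p.1) ∈ G}

/-- Composition of relations: `(x, y) ∈ A ∘ B ↔ ∃ z, (x, z) ∈ A ∧ (z, y) ∈ B`. -/
def relComp (A B : Set (X × X)) : Set (X × X) :=
  {p | ∃ z, (p.1, z) ∈ A ∧ (z, p.2) ∈ B}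

/-- The indifference relation `I_G`. -/
def indiff (G : Set (X × X)) : Set (X × X) :=
  {p | p ∉ asymPart G ∧ (p.2, p.1) ∉ asymPart G}

/-- The equipotency relation `R_G`. -/
def equipot (G : Set (X × X)) : Set (X × X) :=
  {p | {z | (p.1, z) ∈ indiff G} = {z | (p.2, z) ∈ indiff G}}

/-- `T` is a total preorder `S`-extension of the partial order `pr`. -/
def IsSExtension (pr S T : Set (X × X)) : Prop :=
  IsPreorderRel T ∧ IsTotalRel T ∧ asymPart pr ⊆ asymPart T ∧ symPart T = S

/-- `G` is acyclic: for any chain `x 0, …, x n` of `G`-related consecutive points,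
`(x n, x 0) ∉ G`. -/
def IsAcyclicRel (G : Set (X × X)) : Prop :=
  ∀ (n : ℕ) (x : Fin (n + 1) → X),
    (∀ i : Fin n, (x i.castSucc, x i.succ) ∈ G) → (x (Fin.last n), x 0) ∉ G

/-- The transitive hull of `G`: the smallest transitive relation containing `G`. -/
def TransHull (G : Set (X × X)) : Set (X × X) :=
  {p | Relation.TransGen (fun a b => (a, b) ∈ G) p.1 p.2}

/-- `G` is negatively transitive: the complement of `G` is transitive. -/
def IsNegTransRel (G : Set (X × X)) : Prop :=
  ∀ x y z, (x, y) ∉ G → (y, z) ∉ G → (x, z) ∉ G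

/-- `Σ(≼)`: equivalence relations `S` with `S ∘ P_≼ ∘ S` irreflexive. -/
def SigmaCol (pr : Set (X × X)) : Set (Set (X × X)) :=
  {S | IsEquivRel S ∧ ∀ x, (x, x) ∉ relComp S (relComp (asymPart pr) S)}

/-- `Σ*(≼)`: equivalence relations `S` with `S ∘ P_≼ ∘ S` acyclic. -/
def SigmaStar (pr : Set (X × X)) : Set (Set (X × X)) :=
  {S | IsEquivRel S ∧ IsAcyclicRel (relComp S (relComp (asymPart pr) S))}

/-!
Since `P_≼` is saturated by `S`, the relation `S ∪ P_≼` is a preorder whose symmetric part is `S`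
and whose asymmetric part contains `P_≼`, and `(b, a)` does not belong to it. Its quotient by `S`
is a partial order in which `[b] ≤ [a]` fails, so it has a linear extension with `[a] ≤ [b]`
(Szpilrajn, applied to the order enlarged by the pairs `x ≤ [a]`, `[b] ≤ y`); pulling that linear
order back to `X` gives the required total preorder.
-/

theorem extend_partialOrder_of_not_rel {α : Type*} (r : α → α → Prop) [IsPartialOrder α r]
    {a b : α} (hba : ¬ r b a) : ∃ s : α → α → Prop, IsLinearOrder α s ∧ r ≤ s ∧ s a b := by
  let r' x y := r x y ∨ r x a ∧ r b y
  have : IsPartialOrder α r' :=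
    { refl x := .inl (refl x)
      trans x y z := by
        rintro (hxy | ⟨hxa, hby⟩) (hyz | ⟨hya, hbz⟩)
        · exact .inl (_root_.trans hxy hyz)
        · exact .inr ⟨_root_.trans hxy hya, hbz⟩
        · exact .inr ⟨hxa, _root_.trans hby hyz⟩
        · exact (hba (_root_.trans hby hya)).elim
      antisymm x y := by
        rintro (hxy | ⟨hxa, hby⟩) (hyx | ⟨hya, hbx⟩)
        · exact antisymm hxy hyx
        · exact (hba (_root_.trans (_root_.trans hbx hxy) hya)).elim
        · exact (hba (_root_.trans (_root_.trans hby hyx) hxa)).elim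
        · exact (hba (_root_.trans hby hya)).elim }
  obtain ⟨s, hs, hr's⟩ := extend_partialOrder r'
  exact ⟨s, hs, fun x y h => hr's x y (.inl h), hr's a b (.inr ⟨refl a, refl b⟩)⟩

theorem IsPreorderRel.exists_sExtension_mem {R : Set (X × X)} (hR : IsPreorderRel R) {a b : X}
    (hba : (b, a) ∉ R) : ∃ T, IsSExtension R (symPart R) T ∧ (a, b) ∈ T := by
  let _ : Preorder X := { le x y := (x, y) ∈ R, le_refl := hR.1, le_trans := hR.2 }
  let q := toAntisymmetrization (α := X) (· ≤ ·)
  obtain ⟨s, hs, hle, hab⟩ := extend_partialOrder_of_not_rel (α := Antisymmetrization X (· ≤ ·))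
    (· ≤ ·) (a := q a) (b := q b) hba
  have hq : ∀ x y, q x = q y ↔ (x, y) ∈ symPart R := fun x y => Quotient.eq
  refine ⟨{p | s (q p.1) (q p.2)}, ⟨⟨fun x => refl _, fun x y z => _root_.trans⟩,
    fun x y => total_of s _ _, ?_, ?_⟩, hab⟩
  · rintro ⟨x, y⟩ ⟨hxy, hyx⟩
    exact ⟨hle _ _ hxy, fun hsyx => hyx ((hq y x).1 (antisymm hsyx (hle _ _ hxy))).1⟩
  · ext ⟨x, y⟩
    refine ⟨fun h => (hq x y).1 (antisymm h.1 h.2), fun h => ?_⟩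
    show s (q x) (q y) ∧ s (q y) (q x)
    rw [(hq x y).2 h]
    exact ⟨refl _, refl _⟩

theorem IsPreorderRel.asymPart_trans {R : Set (X × X)} (hR : IsPreorderRel R) {x y z : X}
    (hxy : (x, y) ∈ asymPart R) (hyz : (y, z) ∈ asymPart R) : (x, z) ∈ asymPart R :=
  ⟨hR.2 _ _ _ hxy.1 hyz.1, fun hzx => hyz.2 (hR.2 _ _ _ hzx hxy.1)⟩

section StrictUnionEquiv

variable {S P : Set (X × X)}

theorem swap_notMem_union_of_mem
    (hP : ∀ {x y z}, (x, y) ∈ P → (y, z) ∈ P → (x, z) ∈ P) (hP_irrefl : ∀ x, (x, x) ∉ P)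
    (hPS : relComp P S ⊆ P) {x y : X} (hxy : (x, y) ∈ P) : (y, x) ∉ S ∪ P := by
  rintro (hyx | hyx)
  · exact hP_irrefl x (hPS ⟨y, hxy, hyx⟩)
  · exact hP_irrefl x (hP hxy hyx)

theorem isPreorderRel_union (hS : IsEquivRel S)
    (hP : ∀ {x y z}, (x, y) ∈ P → (y, z) ∈ P → (x, z) ∈ P)
    (hPS : relComp P S ⊆ P) (hSP : relComp S P ⊆ P) : IsPreorderRel (S ∪ P) := by
  refine ⟨fun x => .inl (hS.1 x), ?_⟩
  rintro x y z (hxy | hxy) (hyz | hyz)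
  · exact .inl (hS.2.2 _ _ _ hxy hyz)
  · exact .inr (hSP ⟨y, hxy, hyz⟩)
  · exact .inr (hPS ⟨y, hxy, hyz⟩)
  · exact .inr (hP hxy hyz)

theorem symPart_union (hS : IsEquivRel S)
    (hP : ∀ {x y z}, (x, y) ∈ P → (y, z) ∈ P → (x, z) ∈ P) (hP_irrefl : ∀ x, (x, x) ∉ P)
    (hPS : relComp P S ⊆ P) : symPart (S ∪ P) = S := by
  ext ⟨x, y⟩
  refine ⟨fun ⟨hxy, hyx⟩ => ?_, fun h => ⟨.inl h, .inl (hS.2.1 _ _ h)⟩⟩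
  rcases hxy with hxy | hxy
  · exact hxy
  · exact (swap_notMem_union_of_mem hP hP_irrefl hPS hxy hyx).elim

theorem subset_asymPart_union
    (hP : ∀ {x y z}, (x, y) ∈ P → (y, z) ∈ P → (x, z) ∈ P) (hP_irrefl : ∀ x, (x, x) ∉ P)
    (hPS : relComp P S ⊆ P) : P ⊆ asymPart (S ∪ P) :=
  fun _ h => ⟨.inr h, swap_notMem_union_of_mem hP hP_irrefl hPS h⟩

end StrictUnionEquiv

theorem exists_total_preorder_S_extension_pair_general (pr S : Set (X × X))
    (hpr : IsPartialOrderRel pr) (hS : IsEquivRel S)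
    (h1 : relComp (asymPart pr) S = asymPart pr)
    (h2 : relComp S (asymPart pr) = asymPart pr)
    (a b : X) (hba : (b, a) ∉ pr ∪ S) :
    ∃ T : Set (X × X), IsSExtension pr S T ∧ (a, b) ∈ T := by
  have hP : ∀ {x y z}, (x, y) ∈ asymPart pr → (y, z) ∈ asymPart pr → (x, z) ∈ asymPart pr :=
    hpr.1.asymPart_trans
  have hP_irrefl : ∀ x, (x, x) ∉ asymPart pr := fun _ h => h.2 h.1
  have hba' : (b, a) ∉ S ∪ asymPart pr := by
    rintro (h | h)
    exacts [hba (.inr h), hba (.inl h.1)]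
  obtain ⟨T, ⟨hT, hT_total, hPT, hST⟩, habT⟩ :=
    (isPreorderRel_union hS hP h1.subset h2.subset).exists_sExtension_mem hba'
  rw [symPart_union hS hP hP_irrefl h1.subset] at hST
  exact ⟨T, ⟨hT, hT_total, (subset_asymPart_union hP hP_irrefl h1.subset).trans hPT, hST⟩, habT⟩

theorem exists_total_preorder_S_extension_pair [Nonempty X] (pr S : Set (X × X))
    (hpr : IsPartialOrderRel pr) (hS : IsEquivRel S)
    (h1 : relComp (asymPart pr) S = asymPart pr)
    (h2 : relComp S (asymPart pr) = asymPart pr)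
    (a b : X) (hab : (a, b) ∉ pr ∪ S) (hba : (b, a) ∉ pr ∪ S) :
    ∃ T : Set (X × X), IsSExtension pr S T ∧ (a, b) ∈ T :=
  exists_total_preorder_S_extension_pair_general pr S hpr hS h1 h2 a b hba
end

section
/- Let ≼ be a partial order on a nonempty set X with asymmetric part P_≼, and let S be an equivalence relation on X satisfying P_≼ ∘ S = S ∘ P_≼ = P_≼. Then the intersection of all total preorder S-extensions of ≼ equals the preorder ≼ ∪ S. -/
/-!
Write `P` for the asymmetric part of `≼`. The hypotheses `P ∘ S = S ∘ P = P` make `Q := S ∪ P` a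
preorder with symmetric part `S`, and `Q = ≼ ∪ S`; the `S`-extensions of `≼` are then exactly the
total preorders containing `Q` with symmetric part `S`. So it suffices that every preorder `Q` is the
intersection of its total extensions with the same symmetric part: given `(a, b) ∉ Q`, adjoin
`(b, a)` and close transitively (this creates no new indifferences), pass to the quotient by the
symmetric part, and extend the resulting partial order to a linear one by Szpilrajn's theorem.
-/

variable {X : Type*}

theorem notMem_asymPart_self (G : Set (X × X)) (x : X) : (x, x) ∉ asymPart G :=
  fun h => h.2 h.1

theorem symPart_subset (G : Set (X × X)) : symPart G ⊆ G :=
  fun _ h => h.1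

/-- The transitive closure of `R ∪ {(x, y)}` when `R` is a preorder. -/
def adjoinPair (R : Set (X × X)) (x y : X) : Set (X × X) :=
  R ∪ {p | (p.1, x) ∈ R ∧ (y, p.2) ∈ R}

theorem subset_adjoinPair {R : Set (X × X)} {x y : X} : R ⊆ adjoinPair R x y :=
  Set.subset_union_left

namespace IsPreorderRel

variable {R : Set (X × X)}

theorem asymPart_trans_s5 (hR : IsPreorderRel R) {x y z : X} (hxy : (x, y) ∈ asymPart R)
    (hyz : (y, z) ∈ asymPart R) : (x, z) ∈ asymPart R :=
  ⟨hR.2 _ _ _ hxy.1 hyz.1, fun hzx => hxy.2 (hR.2 _ _ _ hyz.1 hzx)⟩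

theorem mem_adjoinPair (hR : IsPreorderRel R) (x y : X) : (x, y) ∈ adjoinPair R x y :=
  Or.inr ⟨hR.1 x, hR.1 y⟩

protected theorem adjoinPair (hR : IsPreorderRel R) (x y : X) :
    IsPreorderRel (adjoinPair R x y) := by
  refine ⟨fun z => Or.inl (hR.1 z), ?_⟩
  rintro u v w (huv | ⟨hux, hyv⟩) (hvw | ⟨hvx, hyw⟩)
  · exact Or.inl (hR.2 _ _ _ huv hvw)
  · exact Or.inr ⟨hR.2 _ _ _ huv hvx, hyw⟩
  · exact Or.inr ⟨hux, hR.2 _ _ _ hyv hvw⟩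
  · exact Or.inr ⟨hux, hyw⟩

/-- Any new indifference `u ~ v` would yield a chain `y ≤ u ≤ v ≤ x` or `y ≤ v ≤ u ≤ x` in `R`. -/
theorem symPart_adjoinPair (hR : IsPreorderRel R) {x y : X} (hyx : (y, x) ∉ R) :
    symPart (adjoinPair R x y) = symPart R := by
  refine subset_antisymm ?_ fun p hp => ⟨subset_adjoinPair hp.1, subset_adjoinPair hp.2⟩
  rintro ⟨u, v⟩ ⟨huv | ⟨hux, hyv⟩, hvu | ⟨hvx, hyu⟩⟩
  · exact ⟨huv, hvu⟩
  · exact absurd (hR.2 _ _ _ hyu (hR.2 _ _ _ huv hvx)) hyx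
  · exact absurd (hR.2 _ _ _ hyv (hR.2 _ _ _ hvu hux)) hyx
  · exact absurd (hR.2 _ _ _ hyv hvx) hyx

def symSetoid (hR : IsPreorderRel R) : Setoid X where
  r x y := (x, y) ∈ symPart R
  iseqv :=
    ⟨fun x => ⟨hR.1 x, hR.1 x⟩, fun h => ⟨h.2, h.1⟩,
      fun h h' => ⟨hR.2 _ _ _ h.1 h'.1, hR.2 _ _ _ h'.2 h.2⟩⟩

def quotRel (hR : IsPreorderRel R) : Quotient hR.symSetoid → Quotient hR.symSetoid → Prop :=
  Quotient.lift₂ (fun x y => (x, y) ∈ R) fun _ _ _ _ hx hy => propext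
    ⟨fun h => hR.2 _ _ _ hx.2 (hR.2 _ _ _ h hy.1), fun h => hR.2 _ _ _ hx.1 (hR.2 _ _ _ h hy.2)⟩

instance isPartialOrder_quotRel (hR : IsPreorderRel R) : IsPartialOrder _ hR.quotRel where
  refl := by rintro ⟨x⟩; exact hR.1 x
  trans := by rintro ⟨x⟩ ⟨y⟩ ⟨z⟩; exact hR.2 x y z
  antisymm := by rintro ⟨x⟩ ⟨y⟩ hxy hyx; exact Quotient.sound ⟨hxy, hyx⟩

theorem exists_total_extension (hR : IsPreorderRel R) :
    ∃ T, IsPreorderRel T ∧ IsTotalRel T ∧ R ⊆ T ∧ symPart T = symPart R := by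
  obtain ⟨s, _, hRs⟩ := extend_partialOrder hR.quotRel
  let mk := Quotient.mk hR.symSetoid
  refine ⟨{p | s (mk p.1) (mk p.2)}, ⟨fun x => refl_of s _, fun _ _ _ => trans_of s⟩,
    fun _ _ => total_of s _ _, fun p hp => hRs _ _ hp, ?_⟩
  exact subset_antisymm (fun p hp => Quotient.exact (antisymm_of s hp.1 hp.2))
    fun p hp => ⟨hRs _ _ hp.1, hRs _ _ hp.2⟩

theorem exists_total_extension_notMem (hR : IsPreorderRel R) {a b : X} (hab : (a, b) ∉ R) :
    ∃ T, IsPreorderRel T ∧ IsTotalRel T ∧ R ⊆ T ∧ symPart T = symPart R ∧ (a, b) ∉ T := by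
  obtain ⟨T, hT, hTtot, hRT, hTR⟩ := (hR.adjoinPair b a).exists_total_extension
  rw [hR.symPart_adjoinPair hab] at hTR
  refine ⟨T, hT, hTtot, subset_adjoinPair.trans hRT, hTR, fun habT => hab ?_⟩
  have hab_sym : (a, b) ∈ symPart T := ⟨habT, hRT (hR.mem_adjoinPair b a)⟩
  exact symPart_subset R (hTR ▸ hab_sym)

end IsPreorderRel

section SExtension

variable {pr S T : Set (X × X)}

theorem IsPreorderRel.union_asymPart (hpr : IsPreorderRel pr) (hS : IsEquivRel S)
    (h1 : relComp (asymPart pr) S ⊆ asymPart pr) (h2 : relComp S (asymPart pr) ⊆ asymPart pr) :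
    IsPreorderRel (S ∪ asymPart pr) := by
  refine ⟨fun x => Or.inl (hS.1 x), ?_⟩
  rintro x y z (hxy | hxy) (hyz | hyz)
  · exact Or.inl (hS.2.2 _ _ _ hxy hyz)
  · exact Or.inr (h2 ⟨y, hxy, hyz⟩)
  · exact Or.inr (h1 ⟨y, hxy, hyz⟩)
  · exact Or.inr (hpr.asymPart_trans_s5 hxy hyz)

theorem symPart_union_asymPart (hS : IsEquivRel S) (h1 : relComp (asymPart pr) S ⊆ asymPart pr) :
    symPart (S ∪ asymPart pr) = S := by
  refine subset_antisymm ?_ fun p hp => ⟨Or.inl hp, Or.inl (hS.2.1 _ _ hp)⟩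
  rintro ⟨x, y⟩ ⟨hxy | hxy, hyx | hyx⟩
  · exact hxy
  · exact absurd (h1 ⟨x, hyx, hxy⟩) (notMem_asymPart_self _ y)
  · exact absurd (h1 ⟨y, hxy, hyx⟩) (notMem_asymPart_self _ x)
  · exact absurd hyx.1 hxy.2

theorem union_asymPart_eq (hpr : IsPartialOrderRel pr) (hS : IsEquivRel S) :
    S ∪ asymPart pr = pr ∪ S := by
  refine subset_antisymm (Set.union_subset Set.subset_union_right fun p hp => Or.inl hp.1) ?_
  rintro ⟨x, y⟩ (hxy | hxy)
  · by_cases hyx : (y, x) ∈ pr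
    · obtain rfl := hpr.2 x y hxy hyx
      exact Or.inl (hS.1 x)
    · exact Or.inr ⟨hxy, hyx⟩
  · exact Or.inl hxy

theorem IsSExtension.union_asymPart_subset (hT : IsSExtension pr S T) : S ∪ asymPart pr ⊆ T :=
  Set.union_subset (hT.2.2.2 ▸ symPart_subset T) (hT.2.2.1.trans fun _ hp => hp.1)

theorem isSExtension_of_asymPart_subset (h1 : relComp (asymPart pr) S ⊆ asymPart pr)
    (hT : IsPreorderRel T) (hTtot : IsTotalRel T) (hPT : asymPart pr ⊆ T) (hTS : symPart T = S) :
    IsSExtension pr S T := by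
  refine ⟨hT, hTtot, fun p hp => ⟨hPT hp, fun hrev => ?_⟩, hTS⟩
  have hS_rev : (p.2, p.1) ∈ S := hTS ▸ ⟨hrev, hPT hp⟩
  exact notMem_asymPart_self pr p.1 (h1 ⟨p.2, hp, hS_rev⟩)

end SExtension

theorem sInter_S_extensions_eq_union_general (pr S : Set (X × X))
    (hpr : IsPartialOrderRel pr) (hS : IsEquivRel S)
    (h1 : relComp (asymPart pr) S = asymPart pr)
    (h2 : relComp S (asymPart pr) = asymPart pr) :
    ⋂₀ {T : Set (X × X) | IsSExtension pr S T} = pr ∪ S := by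
  have hQ := hpr.1.union_asymPart hS h1.le h2.le
  rw [← union_asymPart_eq hpr hS]
  refine subset_antisymm (fun p hp => ?_) (Set.subset_sInter fun T hT => hT.union_asymPart_subset)
  by_contra hpQ
  obtain ⟨T, hT, hTtot, hQT, hTS, hpT⟩ := hQ.exists_total_extension_notMem hpQ
  rw [symPart_union_asymPart hS h1.le] at hTS
  exact hpT (hp T (isSExtension_of_asymPart_subset h1.le hT hTtot
    (Set.subset_union_right.trans hQT) hTS))

theorem sInter_S_extensions_eq_union [Nonempty X] (pr S : Set (X × X))
    (hpr : IsPartialOrderRel pr) (hS : IsEquivRel S)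
    (h1 : relComp (asymPart pr) S = asymPart pr)
    (h2 : relComp S (asymPart pr) = asymPart pr) :
    ⋂₀ {T : Set (X × X) | IsSExtension pr S T} = pr ∪ S :=
  sInter_S_extensions_eq_union_general pr S hpr hS h1 h2
end

section
/- Let ≼ be a partial order on a nonempty set X with asymmetric part P_≼ and S an equivalence relation on X. The relation S ∪ (S ∘ P_≼ ∘ S) is the unique total preorder S-extension of ≼ if and only if S belongs to the collection Σ*(≼) and S is maximal with respect to inclusion in the collection Σ(≼). -/
/-!
Write `Q = S ∘ P_≼ ∘ S`. Any total preorder `S`-extension `T` contains `S` and has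
`Q ⊆ P_T`; since `P_T` is transitive and irreflexive, `Q` is acyclic, and this inclusion
together with totality pins `T` down to `S ∪ Q` as soon as `S ∪ Q` is total. For
`S ∈ Σ(≼)`, totality of `S ∪ Q` is exactly maximality of `S` in `Σ(≼)`: a pair `x, y`
incomparable for `S ∪ Q` lets one merge the classes of `x` and `y` and stay in `Σ(≼)`,
while a pair related by `Q` can never be merged. Finally, for acyclic `Q` and total
`S ∪ Q`, the absence of 2- and 3-cycles makes `Q` transitive, so `S ∪ Q` is a total
preorder whose symmetric part is `S`.
-/

variable {X : Type*}

section Acyclic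

variable {G A : Set (X × X)}

theorem isAcyclicRel_of_trans_of_irrefl
    (htrans : ∀ x y z, (x, y) ∈ A → (y, z) ∈ A → (x, z) ∈ A) (hirr : ∀ x, (x, x) ∉ A) :
    IsAcyclicRel A := by
  intro n x hchain hlast
  have : IsTrans X (fun a b => (a, b) ∈ A) := ⟨htrans⟩
  have hpath := (Fin.liftFun_iff_succ (fun a b => (a, b) ∈ A)).2 hchain
  cases n with
  | zero => exact hirr (x 0) hlast
  | succ m => exact hirr (x 0) (htrans _ _ _ (hpath Fin.last_pos) hlast)

theorem IsAcyclicRel.mono (hA : IsAcyclicRel A) (hGA : G ⊆ A) : IsAcyclicRel G :=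
  fun n x hchain hlast => hA n x (fun i => hGA (hchain i)) (hGA hlast)

theorem IsAcyclicRel.asymm (hG : IsAcyclicRel G) {x y : X} (hxy : (x, y) ∈ G) :
    (y, x) ∉ G :=
  fun hyx => hG 1 ![x, y] (fun i => by fin_cases i; simpa using hxy) (by simpa using hyx)

theorem IsAcyclicRel.irrefl (hG : IsAcyclicRel G) (x : X) : (x, x) ∉ G :=
  fun hx => hG.asymm hx hx

theorem IsAcyclicRel.not_three_cycle (hG : IsAcyclicRel G) {x y z : X} (hxy : (x, y) ∈ G)
    (hyz : (y, z) ∈ G) : (z, x) ∉ G :=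
  fun hzx => hG 2 ![x, y, z] (fun i => by fin_cases i <;> simpa) (by simpa using hzx)

theorem asymPart_trans (htrans : ∀ x y z, (x, y) ∈ A → (y, z) ∈ A → (x, z) ∈ A) :
    ∀ x y z, (x, y) ∈ asymPart A → (y, z) ∈ asymPart A → (x, z) ∈ asymPart A :=
  fun x y z ⟨hxy, hyx⟩ ⟨hyz, _⟩ =>
    ⟨htrans x y z hxy hyz, fun hzx => hyx (htrans y z x hyz hzx)⟩

theorem isAcyclicRel_asymPart (htrans : ∀ x y z, (x, y) ∈ A → (y, z) ∈ A → (x, z) ∈ A) :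
    IsAcyclicRel (asymPart A) :=
  isAcyclicRel_of_trans_of_irrefl (asymPart_trans htrans) fun _ hx => hx.2 hx.1

end Acyclic

section SExtension

variable {pr S S' P T : Set (X × X)}

theorem IsEquivRel.comp_comp_mem_left (hS : IsEquivRel S) {x y z : X} (hxy : (x, y) ∈ S)
    (hyz : (y, z) ∈ relComp S (relComp P S)) : (x, z) ∈ relComp S (relComp P S) :=
  let ⟨a, hya, hrest⟩ := hyz
  ⟨a, hS.2.2 x y a hxy hya, hrest⟩

theorem IsEquivRel.comp_comp_mem_right (hS : IsEquivRel S) {x y z : X}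
    (hxy : (x, y) ∈ relComp S (relComp P S)) (hyz : (y, z) ∈ S) :
    (x, z) ∈ relComp S (relComp P S) :=
  let ⟨a, hxa, b, hab, hby⟩ := hxy
  ⟨a, hxa, b, hab, hS.2.2 b y z hby hyz⟩

theorem IsEquivRel.mem_comp_comp (hS : IsEquivRel S) {x y : X} (hxy : (x, y) ∈ P) :
    (x, y) ∈ relComp S (relComp P S) :=
  ⟨x, hS.1 x, y, hxy, hS.1 y⟩

theorem IsSExtension.subset (hT : IsSExtension pr S T) : S ⊆ T :=
  hT.2.2.2 ▸ fun _ hp => hp.1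

theorem IsSExtension.comp_comp_subset_asymPart (hT : IsSExtension pr S T) :
    relComp S (relComp (asymPart pr) S) ⊆ asymPart T := by
  have hST := hT.subset
  obtain ⟨⟨-, htrans⟩, -, hprT, -⟩ := hT
  rintro ⟨x, y⟩ ⟨a, hxa, b, hab, hby⟩
  obtain ⟨habT, hbaT⟩ := hprT hab
  refine ⟨htrans x b y (htrans x a b (hST hxa) habT) (hST hby), fun hyx => hbaT ?_⟩
  exact htrans b x a (htrans b y x (hST hby) hyx) (hST hxa)

theorem IsSExtension.mem_sigmaStar (hS : IsEquivRel S) (hT : IsSExtension pr S T) :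
    S ∈ SigmaStar pr :=
  ⟨hS, (isAcyclicRel_asymPart hT.1.2).mono hT.comp_comp_subset_asymPart⟩

theorem sigmaStar_subset_sigmaCol : SigmaStar pr ⊆ SigmaCol pr :=
  fun _ hS => ⟨hS.1, hS.2.irrefl⟩

theorem mem_sigmaCol_iff (hS : IsEquivRel S) :
    S ∈ SigmaCol pr ↔ ∀ a b, (a, b) ∈ asymPart pr → (b, a) ∉ S := by
  refine ⟨fun h a b hab hba => h.2 a ⟨a, hS.1 a, b, hab, hba⟩, fun h => ⟨hS, ?_⟩⟩
  rintro z ⟨a, hza, b, hab, hbz⟩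
  exact h a b hab (hS.2.2 b z a hbz hza)

theorem eq_of_isTotalRel_union (hS : IsEquivRel S)
    (htot : IsTotalRel (S ∪ relComp S (relComp (asymPart pr) S)))
    (hS' : S' ∈ SigmaCol pr) (hSS' : S ⊆ S') : S' = S := by
  have hS'P := (mem_sigmaCol_iff hS'.1).1 hS'
  obtain ⟨-, hsymm', htrans'⟩ := hS'.1
  have hsep : ∀ u v, (u, v) ∈ relComp S (relComp (asymPart pr) S) → (v, u) ∉ S' := by
    rintro u v ⟨a, hua, b, hab, hbv⟩ hvu
    exact hS'P a b hab (htrans' b u a (htrans' b v u (hSS' hbv) hvu) (hSS' hua))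
  refine Set.Subset.antisymm (fun ⟨u, v⟩ huv => ?_) hSS'
  rcases htot u v with (h | h) | (h | h)
  · exact h
  · exact absurd (hsymm' u v huv) (hsep u v h)
  · exact hS.2.1 v u h
  · exact absurd huv (hsep v u h)

def mergeClasses (S : Set (X × X)) (x y : X) : Set (X × X) :=
  S ∪ {p | (p.1, x) ∈ S ∧ (y, p.2) ∈ S} ∪ {p | (p.1, y) ∈ S ∧ (x, p.2) ∈ S}

theorem IsEquivRel.mergeClasses (hS : IsEquivRel S) (x y : X) :
    IsEquivRel (mergeClasses S x y) := by
  obtain ⟨hrefl, hsymm, htrans⟩ := hS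
  refine ⟨fun z => Or.inl (Or.inl (hrefl z)), ?_, ?_⟩
  · rintro a b ((h | ⟨hax, hyb⟩) | ⟨hay, hxb⟩)
    · exact Or.inl (Or.inl (hsymm a b h))
    · exact Or.inr ⟨hsymm y b hyb, hsymm a x hax⟩
    · exact Or.inl (Or.inr ⟨hsymm x b hxb, hsymm a y hay⟩)
  · rintro a b c ((hab | ⟨hax, hyb⟩) | ⟨hay, hxb⟩) ((hbc | ⟨hbx, hyc⟩) | ⟨hby, hxc⟩)
    · exact Or.inl (Or.inl (htrans a b c hab hbc))
    · exact Or.inl (Or.inr ⟨htrans a b x hab hbx, hyc⟩)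
    · exact Or.inr ⟨htrans a b y hab hby, hxc⟩
    · exact Or.inl (Or.inr ⟨hax, htrans y b c hyb hbc⟩)
    · exact Or.inl (Or.inr ⟨hax, hyc⟩)
    · exact Or.inl (Or.inl (htrans a x c hax hxc))
    · exact Or.inr ⟨hay, htrans x b c hxb hbc⟩
    · exact Or.inl (Or.inl (htrans a y c hay hyc))
    · exact Or.inr ⟨hay, hxc⟩

theorem mergeClasses_mem_sigmaCol (hS : S ∈ SigmaCol pr) {x y : X}
    (hxy : (x, y) ∉ relComp S (relComp (asymPart pr) S))
    (hyx : (y, x) ∉ relComp S (relComp (asymPart pr) S)) :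
    mergeClasses S x y ∈ SigmaCol pr := by
  rw [mem_sigmaCol_iff (hS.1.mergeClasses x y)]
  rintro a b hab ((hba | ⟨hbx, hya⟩) | ⟨hby, hxa⟩)
  · exact (mem_sigmaCol_iff hS.1).1 hS a b hab hba
  · exact hyx ⟨a, hya, b, hab, hbx⟩
  · exact hxy ⟨a, hxa, b, hab, hby⟩

theorem isTotalRel_union_of_maximal (hS : S ∈ SigmaCol pr)
    (hmax : ∀ S' ∈ SigmaCol pr, S ⊆ S' → S' = S) :
    IsTotalRel (S ∪ relComp S (relComp (asymPart pr) S)) := by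
  intro x y
  by_contra! h
  obtain ⟨hxy, hyx⟩ := h
  have hmerge : mergeClasses S x y = S :=
    hmax _ (mergeClasses_mem_sigmaCol hS (hxy ∘ Or.inr) (hyx ∘ Or.inr))
      fun _ hp => Or.inl (Or.inl hp)
  have hxy_merged : (x, y) ∈ mergeClasses S x y := Or.inl (Or.inr ⟨hS.1.1 x, hS.1.1 y⟩)
  exact hxy (Or.inl (hmerge ▸ hxy_merged))

theorem comp_comp_subset_asymPart_union (hS : IsEquivRel S)
    (hasymm : ∀ a b, (a, b) ∈ relComp S (relComp P S) → (b, a) ∉ relComp S (relComp P S)) :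
    relComp S (relComp P S) ⊆ asymPart (S ∪ relComp S (relComp P S)) := by
  rintro ⟨a, b⟩ hab
  refine ⟨Or.inr hab, ?_⟩
  rintro (hba | hba)
  · have haa := hS.comp_comp_mem_right hab hba
    exact hasymm a a haa haa
  · exact hasymm a b hab hba

theorem comp_comp_trans (hS : IsEquivRel S) (hQ : IsAcyclicRel (relComp S (relComp P S)))
    (htot : IsTotalRel (S ∪ relComp S (relComp P S))) {a b c : X}
    (hab : (a, b) ∈ relComp S (relComp P S)) (hbc : (b, c) ∈ relComp S (relComp P S)) :
    (a, c) ∈ relComp S (relComp P S) := by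
  rcases htot a c with (hac | hac) | (hca | hca)
  · exact absurd (hS.comp_comp_mem_left (hS.2.1 a c hac) hab) (hQ.asymm hbc)
  · exact hac
  · exact absurd (hS.comp_comp_mem_right hbc hca) (hQ.asymm hab)
  · exact absurd hca (hQ.not_three_cycle hab hbc)

theorem isSExtension_union (hS : IsEquivRel S)
    (hQ : IsAcyclicRel (relComp S (relComp (asymPart pr) S)))
    (htot : IsTotalRel (S ∪ relComp S (relComp (asymPart pr) S))) :
    IsSExtension pr S (S ∪ relComp S (relComp (asymPart pr) S)) := by
  have hQasym := comp_comp_subset_asymPart_union hS fun _ _ => hQ.asymm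
  have htrans : ∀ a b c, (a, b) ∈ S ∪ relComp S (relComp (asymPart pr) S) →
      (b, c) ∈ S ∪ relComp S (relComp (asymPart pr) S) →
      (a, c) ∈ S ∪ relComp S (relComp (asymPart pr) S) := by
    rintro a b c (hab | hab) (hbc | hbc)
    · exact Or.inl (hS.2.2 a b c hab hbc)
    · exact Or.inr (hS.comp_comp_mem_left hab hbc)
    · exact Or.inr (hS.comp_comp_mem_right hab hbc)
    · exact Or.inr (comp_comp_trans hS hQ htot hab hbc)
  refine ⟨⟨fun x => Or.inl (hS.1 x), htrans⟩, htot,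
    fun _ hp => hQasym (hS.mem_comp_comp hp), ?_⟩
  ext ⟨a, b⟩
  exact ⟨fun ⟨hab, hba⟩ => hab.resolve_right fun h => (hQasym h).2 hba,
    fun hab => ⟨Or.inl hab, Or.inl (hS.2.1 a b hab)⟩⟩

theorem eq_union_of_isSExtension (hS : IsEquivRel S)
    (htot : IsTotalRel (S ∪ relComp S (relComp (asymPart pr) S)))
    (hT : IsSExtension pr S T) : T = S ∪ relComp S (relComp (asymPart pr) S) := by
  have hQT := hT.comp_comp_subset_asymPart
  refine Set.Subset.antisymm (fun ⟨a, b⟩ hab => ?_)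
    (Set.union_subset hT.subset fun _ hp => (hQT hp).1)
  rcases htot a b with h | (hba | hba)
  · exact h
  · exact Or.inl (hS.2.1 b a hba)
  · exact absurd hab (hQT hba).2

end SExtension

theorem union_comp_unique_S_extension_iff_general (pr S : Set (X × X))
    (hS : IsEquivRel S) :
    (IsSExtension pr S (S ∪ relComp S (relComp (asymPart pr) S)) ∧
      ∀ T : Set (X × X), IsSExtension pr S T →
        T = S ∪ relComp S (relComp (asymPart pr) S)) ↔
      (S ∈ SigmaStar pr ∧ S ∈ SigmaCol pr ∧
        ∀ S' ∈ SigmaCol pr, S ⊆ S' → S' = S) := by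
  constructor
  · rintro ⟨hU, -⟩
    have hstar := hU.mem_sigmaStar hS
    exact ⟨hstar, sigmaStar_subset_sigmaCol hstar,
      fun S' hS' hSS' => eq_of_isTotalRel_union hS hU.2.1 hS' hSS'⟩
  · rintro ⟨hstar, hcol, hmax⟩
    have htot := isTotalRel_union_of_maximal hcol hmax
    exact ⟨isSExtension_union hS hstar.2 htot, fun T hT => eq_union_of_isSExtension hS htot hT⟩

theorem union_comp_unique_S_extension_iff [Nonempty X] (pr S : Set (X × X))
    (hpr : IsPartialOrderRel pr) (hS : IsEquivRel S) :
    (IsSExtension pr S (S ∪ relComp S (relComp (asymPart pr) S)) ∧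
      ∀ T : Set (X × X), IsSExtension pr S T →
        T = S ∪ relComp S (relComp (asymPart pr) S)) ↔
      (S ∈ SigmaStar pr ∧ S ∈ SigmaCol pr ∧
        ∀ S' ∈ SigmaCol pr, S ⊆ S' → S' = S) :=
  union_comp_unique_S_extension_iff_general pr S hS
end

section
/- For a preorder ≾ on a nonempty set X, the equipotency relation R_≾ equals the indifference relation I_≾ if and only if the asymmetric part P_≾ is negatively transitive (equivalently, if and only if I_≾ is transitive). -/
variable {X : Type*}

/-!
The indifference relation of any relation is reflexive and symmetric, so `R ⊆ I`, and `R = I` holds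
exactly when `I` is transitive. Since `I` is the complement of `P ∪ P⁻¹`, negative transitivity of `P`
gives transitivity of `I`. Conversely, for a preorder `P` absorbs `≾` on either side: if `x P z`
while neither `x P y` nor `y P z`, then `y ≾ x` or `z ≾ y` would give `y P z` or `x P y`; so
`x I y` and `y I z`, and transitivity of `I` contradicts `x P z`.
-/

section

variable {G : Set (X × X)}

theorem indiff_refl (G : Set (X × X)) (x : X) : (x, x) ∈ indiff G :=
  ⟨fun h => h.2 h.1, fun h => h.2 h.1⟩

theorem indiff_symm {x y : X} (h : (x, y) ∈ indiff G) : (y, x) ∈ indiff G :=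
  ⟨h.2, h.1⟩

theorem equipot_subset_indiff (G : Set (X × X)) : equipot G ⊆ indiff G := by
  rintro ⟨x, y⟩ h
  have hyx : (y, x) ∈ indiff G := (Set.ext_iff.mp h x).mp (indiff_refl G x)
  exact indiff_symm hyx

theorem equipot_eq_indiff_iff_trans :
    equipot G = indiff G ↔
      ∀ x y z : X, (x, y) ∈ indiff G → (y, z) ∈ indiff G → (x, z) ∈ indiff G := by
  constructor
  · intro h x y z hxy hyz
    rw [← h] at hxy hyz ⊢
    exact hxy.trans hyz
  · intro htrans
    refine (equipot_subset_indiff G).antisymm ?_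
    rintro ⟨x, y⟩ hxy
    ext z
    exact ⟨htrans y x z (indiff_symm hxy), htrans x y z hxy⟩

variable (htrans : ∀ x y z, (x, y) ∈ G → (y, z) ∈ G → (x, z) ∈ G)
include htrans

theorem mem_asymPart_of_mem_of_mem_asymPart {x y z : X} (hxy : (x, y) ∈ G)
    (hyz : (y, z) ∈ asymPart G) : (x, z) ∈ asymPart G :=
  ⟨htrans x y z hxy hyz.1, fun hzx => hyz.2 (htrans z x y hzx hxy)⟩

theorem mem_asymPart_of_mem_asymPart_of_mem {x y z : X} (hxy : (x, y) ∈ asymPart G)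
    (hyz : (y, z) ∈ G) : (x, z) ∈ asymPart G :=
  ⟨htrans x y z hxy.1 hyz, fun hzx => hxy.2 (htrans y z x hyz hzx)⟩

theorem isNegTransRel_asymPart_iff :
    IsNegTransRel (asymPart G) ↔
      ∀ x y z : X, (x, y) ∈ indiff G → (y, z) ∈ indiff G → (x, z) ∈ indiff G := by
  constructor
  · intro hneg x y z hxy hyz
    exact ⟨hneg x y z hxy.1 hyz.1, hneg z y x hyz.2 hxy.2⟩
  · intro hI x y z hxy hyz hxz
    by_cases hyx : (y, x) ∈ G
    · exact hyz (mem_asymPart_of_mem_of_mem_asymPart htrans hyx hxz)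
    by_cases hzy : (z, y) ∈ G
    · exact hxy (mem_asymPart_of_mem_asymPart_of_mem htrans hxz hzy)
    exact (hI x y z ⟨hxy, fun h => hyx h.1⟩ ⟨hyz, fun h => hzy h.1⟩).1 hxz

end

theorem equipot_eq_indiff_iff_general (pre : Set (X × X))
    (hpre : IsPreorderRel pre) :
    (equipot pre = indiff pre ↔ IsNegTransRel (asymPart pre)) ∧
    (equipot pre = indiff pre ↔
      ∀ x y z : X, (x, y) ∈ indiff pre → (y, z) ∈ indiff pre →
        (x, z) ∈ indiff pre) :=
  ⟨equipot_eq_indiff_iff_trans.trans (isNegTransRel_asymPart_iff hpre.2).symm,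
    equipot_eq_indiff_iff_trans⟩

theorem equipot_eq_indiff_iff [Nonempty X] (pre : Set (X × X))
    (hpre : IsPreorderRel pre) :
    (equipot pre = indiff pre ↔ IsNegTransRel (asymPart pre)) ∧
    (equipot pre = indiff pre ↔
      ∀ x y z : X, (x, y) ∈ indiff pre → (y, z) ∈ indiff pre →
        (x, z) ∈ indiff pre) :=
  equipot_eq_indiff_iff_general pre hpre
end
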